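/- arXiv:2102.00936 — 5 statements merged into one kernel-verified Lean document; each statement's English description precedes it below -/
import Mathlib

section
/- Let M be a commutative monoid and I the augmentation ideal of ℤ[M]. Then I^{n+1} is generated as an abelian group by the elements x · (m_0 - 1)(m_1 - 1)⋯(m_n - 1) for x, m_0, …, m_n ∈ M. -/
/-- The augmentation ideal of the monoid ring `ℤ[M]`: the kernel of the ring map
`ℤ[M] → ℤ` sending every `m ∈ M` to `1`. -/
noncomputable def augIdeal (M : Type*) [CommMonoid M] : Ideal (MonoidAlgebra ℤ M) :=
  RingHom.ker ((MonoidAlgebra.lift ℤ ℤ M) 1)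

/-! Since `f - ε(f) · 1` is a combination of the elements `m - 1`, these span the augmentation
ideal as an abelian group, so its `(n+1)`st power is spanned by the products
`(m₀ - 1)⋯(mₙ - 1)`. The extra factor `x` is harmless: it keeps the products inside the ideal. -/

open Submodule Set
open scoped Pointwise

theorem Set.range_pow {α ι : Type*} [CommMonoid α] (f : ι → α) (n : ℕ) :
    range f ^ n = range fun g : Fin n → ι => ∏ i, f (g i) := by
  ext a
  simp only [mem_pow_iff_prod, mem_range]
  constructor
  · rintro ⟨b, hb, rfl⟩
    choose g hg using hb
    exact ⟨g, by simp only [hg]⟩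
  · rintro ⟨g, rfl⟩
    exact ⟨fun i => f (g i), fun i => ⟨g i, rfl⟩, rfl⟩

namespace MonoidAlgebra

variable {k M : Type*} [CommRing k] [Monoid M]

theorem sub_algebraMap_lift_one_mem_span (f : MonoidAlgebra k M) :
    f - algebraMap k _ (lift k k M 1 f) ∈ span k (range fun m => of k M m - 1) := by
  induction f using MonoidAlgebra.induction_on with
  | of m => exact subset_span ⟨m, by simp [one_def]⟩
  | add f g hf hg => simpa [add_sub_add_comm] using add_mem hf hg
  | smul r f hf =>
    rw [map_smul, smul_eq_mul, map_mul, ← Algebra.smul_def, ← smul_sub]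
    exact smul_mem _ r hf

theorem restrictScalars_ker_lift_one :
    (RingHom.ker (lift k k M 1)).restrictScalars k = span k (range fun m => of k M m - 1) := by
  refine le_antisymm (fun f hf => ?_) (span_le.2 ?_)
  · simpa [RingHom.mem_ker.1 hf] using sub_algebraMap_lift_one_mem_span f
  · rintro _ ⟨m, rfl⟩
    simp [RingHom.mem_ker]

end MonoidAlgebra

open MonoidAlgebra

theorem restrictScalars_augIdeal_pow (M : Type*) [CommMonoid M] (n : ℕ) :
    (augIdeal M ^ (n + 1)).restrictScalars ℤ =
      span ℤ (range fun m : Fin (n + 1) → M => ∏ i, (of ℤ M (m i) - 1)) := by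
  rw [restrictScalars_pow n.succ_ne_zero, augIdeal, restrictScalars_ker_lift_one, span_pow,
    Set.range_pow]

/-- The `(n+1)`st power of the augmentation ideal `I ⊆ ℤ[M]` is generated as an abelian group
by the elements `x · (m₀ - 1)(m₁ - 1)⋯(mₙ - 1)` for `x, m₀, …, mₙ ∈ M`. -/
theorem augIdeal_pow_eq_addSubgroup_closure (M : Type*) [CommMonoid M] (n : ℕ) :
    (augIdeal M ^ (n + 1)).toAddSubgroup =
      AddSubgroup.closure {z : MonoidAlgebra ℤ M |
        ∃ (x : M) (m : Fin (n + 1) → M),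
          z = MonoidAlgebra.of ℤ M x * ∏ i, (MonoidAlgebra.of ℤ M (m i) - 1)} := by
  rw [← span_int_eq_addSubgroupClosure]
  change ((augIdeal M ^ (n + 1)).restrictScalars ℤ).toAddSubgroup = _
  refine congrArg Submodule.toAddSubgroup (le_antisymm ?_ (span_le.2 ?_))
  · rw [restrictScalars_augIdeal_pow]
    exact span_mono fun _ ⟨m, hm⟩ => ⟨1, m, by rw [map_one, one_mul, ← hm]⟩
  · rintro _ ⟨x, m, rfl⟩
    refine Ideal.mul_mem_left _ _ ?_
    show _ ∈ (augIdeal M ^ (n + 1)).restrictScalars ℤ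
    rw [restrictScalars_augIdeal_pow]
    exact subset_span ⟨m, rfl⟩
end

section
/- Let M be a commutative monoid with group completion i: M → M⁺. Then the induced ring homomorphism ℤ[M]/I_M^{n+1} → ℤ[M⁺]/I_{M⁺}^{n+1} is an isomorphism, where I_M and I_{M⁺} denote the respective augmentation ideals. -/
/-- `i : M →* G` is a group completion of the commutative monoid `M` if every monoid
homomorphism from `M` to a commutative group factors uniquely through `i`. -/
def IsGroupCompletion {M G : Type} [CommMonoid M] [CommGroup G] (i : M →* G) : Prop :=
  ∀ (H : Type) [CommGroup H] (φ : M →* H), ∃! ψ : G →* H, ψ.comp i = φ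

open MonoidAlgebra

section AugmentationIdeal

variable {M : Type*} [CommMonoid M]

theorem of_sub_one_mem_augIdeal (m : M) : of ℤ M m - 1 ∈ augIdeal M := by
  simp [augIdeal, RingHom.mem_ker]

theorem ringHom_ext_int {A : Type*} [Semiring A] {f g : MonoidAlgebra ℤ M →+* A}
    (h : ∀ m, f (of ℤ M m) = g (of ℤ M m)) : f = g :=
  ringHom_ext' (RingHom.ext_int _ _) (MonoidHom.ext h)

theorem augIdeal_le_ker {A : Type*} [CommRing A] (f : MonoidAlgebra ℤ M →+* A)
    (hf : ∀ m, f (of ℤ M m) = 1) : augIdeal M ≤ RingHom.ker f := by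
  have hfactor : f = (Int.castRingHom A).comp (lift ℤ ℤ M 1 : MonoidAlgebra ℤ M →+* ℤ) :=
    ringHom_ext_int fun m => by rw [hf]; simp
  intro x hx
  rw [RingHom.mem_ker, hfactor, RingHom.comp_apply]
  simp only [augIdeal, RingHom.mem_ker] at hx
  simp [hx]

theorem augIdeal_pow_le_comap {A : Type*} [CommRing A] (f : MonoidAlgebra ℤ M →+* A)
    (K : Ideal A) (hf : ∀ m, f (of ℤ M m) - 1 ∈ K) (k : ℕ) :
    augIdeal M ^ k ≤ (K ^ k).comap f := by
  have hle : (augIdeal M).map f ≤ K := by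
    rw [Ideal.map_le_iff_le_comap, ← Ideal.mk_ker (I := K), RingHom.comap_ker]
    exact augIdeal_le_ker _ fun m => by simpa using Ideal.Quotient.eq.mpr (hf m)
  rw [← Ideal.map_le_iff_le_comap, Ideal.map_pow]
  exact Ideal.pow_right_mono hle k

theorem isUnit_mk_of (n : ℕ) (m : M) :
    IsUnit (Ideal.Quotient.mk (augIdeal M ^ (n + 1)) (of ℤ M m)) := by
  have hnil : IsNilpotent (Ideal.Quotient.mk (augIdeal M ^ (n + 1)) (of ℤ M m - 1)) :=
    ⟨n + 1, by
      rw [← map_pow, Ideal.Quotient.eq_zero_iff_mem]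
      exact Ideal.pow_mem_pow (of_sub_one_mem_augIdeal m) (n + 1)⟩
  simpa using hnil.isUnit_one_add

end AugmentationIdeal

namespace IsGroupCompletion

variable {M G : Type} [CommMonoid M] [CommGroup G] {i : M →* G}

theorem hom_ext (hi : IsGroupCompletion i) {H : Type} [CommGroup H] {f g : G →* H}
    (h : f.comp i = g.comp i) : f = g :=
  (hi H (g.comp i)).unique h rfl

theorem ringHom_ext (hi : IsGroupCompletion i) {A : Type} [CommSemiring A]
    {f g : MonoidAlgebra ℤ G →+* A}
    (h : f.comp (mapDomainRingHom ℤ i) = g.comp (mapDomainRingHom ℤ i)) : f = g := by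
  refine ringHom_ext_int fun x => ?_
  have hunits : ((f : MonoidAlgebra ℤ G →* A).comp (of ℤ G)).toHomUnits =
      ((g : MonoidAlgebra ℤ G →* A).comp (of ℤ G)).toHomUnits :=
    hi.hom_ext <| MonoidHom.ext fun m => Units.ext <| by
      simpa using DFunLike.congr_fun h (of ℤ M m)
  simpa using congr_arg Units.val (DFunLike.congr_fun hunits x)

theorem val_sub_one_mem (hi : IsGroupCompletion i) {A : Type} [CommRing A] (K : Ideal A)
    (u : G →* Aˣ) (hu : ∀ m, (u (i m) : A) - 1 ∈ K) (g : G) : (u g : A) - 1 ∈ K := by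
  have htriv : (Units.map (Ideal.Quotient.mk K : A →* A ⧸ K)).comp u = 1 :=
    hi.hom_ext <| MonoidHom.ext fun m => Units.ext <| by
      simpa using Ideal.Quotient.eq.mpr (hu m)
  simpa using Ideal.Quotient.eq.mp (congr_arg Units.val (DFunLike.congr_fun htriv g))

theorem exists_quotient_ringHom_comp_mapDomain (hi : IsGroupCompletion i) (n : ℕ) :
    ∃ ψ : MonoidAlgebra ℤ G ⧸ augIdeal G ^ (n + 1) →+* MonoidAlgebra ℤ M ⧸ augIdeal M ^ (n + 1),
      (ψ.comp (Ideal.Quotient.mk _)).comp (mapDomainRingHom ℤ i) = Ideal.Quotient.mk _ := by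
  set Q := MonoidAlgebra ℤ M ⧸ augIdeal M ^ (n + 1)
  set πM := Ideal.Quotient.mk (augIdeal M ^ (n + 1))
  obtain ⟨u, hu, -⟩ := hi Qˣ (IsUnit.liftRight ((πM : _ →* Q).comp (of ℤ M)) (isUnit_mk_of n))
  have hui : ∀ m, (u (i m) : Q) = πM (of ℤ M m) := fun m =>
    congr_arg Units.val (DFunLike.congr_fun hu m)
  let φ : MonoidAlgebra ℤ G →+* Q := lift ℤ Q G ((Units.coeHom Q).comp u)
  have hφ_aug : ∀ g, φ (of ℤ G g) - 1 ∈ (augIdeal M).map πM := by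
    have hu_aug := hi.val_sub_one_mem ((augIdeal M).map πM) u fun m => by
      rw [hui, ← map_one πM, ← map_sub]
      exact Ideal.mem_map_of_mem _ (of_sub_one_mem_augIdeal m)
    simpa [φ] using hu_aug
  refine ⟨Ideal.Quotient.lift _ φ fun x hx => ?_, ringHom_ext_int fun m => ?_⟩
  · have := augIdeal_pow_le_comap φ _ hφ_aug (n + 1) hx
    rwa [← Ideal.map_pow, Ideal.map_quotient_self, Ideal.mem_comap, Ideal.mem_bot] at this
  · simpa [φ] using hui m

end IsGroupCompletion

/-- If `i : M → M⁺` is the group completion of a commutative monoid `M`, then the induced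
ring homomorphism `ℤ[M]/I_M^{n+1} → ℤ[M⁺]/I_{M⁺}^{n+1}` is an isomorphism. -/
theorem monoidAlgebra_quotient_iso_of_group_completion {M G : Type} [CommMonoid M]
    [CommGroup G] (i : M →* G) (hi : IsGroupCompletion i) (n : ℕ) :
    ∃ ψ : MonoidAlgebra ℤ M ⧸ augIdeal M ^ (n + 1) →+*
        MonoidAlgebra ℤ G ⧸ augIdeal G ^ (n + 1),
      ψ.comp (Ideal.Quotient.mk (augIdeal M ^ (n + 1))) =
          (Ideal.Quotient.mk (augIdeal G ^ (n + 1))).comp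
            (MonoidAlgebra.mapDomainRingHom ℤ i) ∧
        Function.Bijective ψ := by
  have hmap : augIdeal M ^ (n + 1) ≤ (augIdeal G ^ (n + 1)).comap (mapDomainRingHom ℤ i) :=
    augIdeal_pow_le_comap _ _ (fun m => by simpa using of_sub_one_mem_augIdeal (i m)) _
  let ψ := Ideal.quotientMap _ _ hmap
  have hψ := Ideal.quotientMap_comp_mk hmap
  obtain ⟨ψ', hψ'⟩ := hi.exists_quotient_ringHom_comp_mapDomain n
  have hleft : ψ'.comp ψ = RingHom.id _ := Ideal.Quotient.ringHom_ext <| by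
    rw [RingHom.comp_assoc, hψ, ← RingHom.comp_assoc, hψ', RingHom.id_comp]
  have hright : ψ.comp ψ' = RingHom.id _ := Ideal.Quotient.ringHom_ext <| hi.ringHom_ext <| by
    rw [RingHom.id_comp, RingHom.comp_assoc, RingHom.comp_assoc, ← hψ,
      ← RingHom.comp_assoc _ ψ ψ', hleft, RingHom.id_comp]
  exact ⟨ψ, hψ, (RingEquiv.ofRingHom ψ ψ' hright hleft).bijective⟩
end

section
/- Let f: A → A' be a polynomial map between abelian groups and M ⊆ A a submonoid such that f(x + m) = f(x) for all x ∈ A and m ∈ M. Then f(x + m') = f(x) for all x ∈ A and all m' in the subgroup M' of A generated by M, so f factors through A/M'. -/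
open Function

/-- `PolyDeg n f` means that `f` is polynomial of degree `≤ n - 1`;
`PolyDeg 0 f` means `f` is identically zero (degree `≤ -1`),
and `PolyDeg (n+1) f` means `f` is polynomial of degree `≤ n`. -/
def PolyDeg {M A : Type*} [AddCommMonoid M] [AddCommGroup A] : ℕ → (M → A) → Prop
  | 0, f => ∀ x, f x = 0
  | n + 1, f => ∀ y : M, PolyDeg n fun x => f (x + y) - f x

section Periods

variable {A B : Type*} [AddGroup A]

def periodAddSubgroup (f : A → B) : AddSubgroup A where
  carrier := {c | Periodic f c}
  add_mem' := Periodic.add_period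
  zero_mem' := fun x => congrArg f (add_zero x)
  neg_mem' := Periodic.neg

theorem closure_le_periodAddSubgroup {f : A → B} {S : Set A} (h : ∀ c ∈ S, Periodic f c) :
    AddSubgroup.closure S ≤ periodAddSubgroup f :=
  (AddSubgroup.closure_le _).mpr h

theorem exists_comp_mk_of_periodic {f : A → B} {H : AddSubgroup A}
    (h : ∀ c ∈ H, Periodic f c) : ∃ g : A ⧸ H → B, f = g ∘ QuotientAddGroup.mk := by
  refine ⟨Quotient.lift f fun a b hab => ?_, rfl⟩
  have hmem : -a + b ∈ H := QuotientAddGroup.leftRel_apply.mp hab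
  calc f a = f (a + (-a + b)) := (h _ hmem a).symm
    _ = f b := by rw [add_neg_cancel_left]

end Periods

theorem polyDeg_invariant_subgroup_general {A A' : Type*} [AddCommGroup A]
    (f : A → A') (M : AddSubmonoid A)
    (h : ∀ x : A, ∀ m ∈ M, f (x + m) = f x) :
    (∀ x : A, ∀ m' ∈ AddSubgroup.closure (M : Set A), f (x + m') = f x) ∧
      ∃ g : A ⧸ AddSubgroup.closure (M : Set A) → A',
        f = g ∘ (QuotientAddGroup.mk : A → A ⧸ AddSubgroup.closure (M : Set A)) := by
  have hperiodic : ∀ c ∈ AddSubgroup.closure (M : Set A), Periodic f c := fun c hc =>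
    closure_le_periodAddSubgroup (fun m hm x => h x m hm) hc
  exact ⟨fun x m' hm' => hperiodic m' hm' x, exists_comp_mk_of_periodic hperiodic⟩

/-- If `f : A → A'` is a polynomial map between abelian groups which is invariant under
translation by elements of a submonoid `M ⊆ A`, then `f` is invariant under translation by
every element of the subgroup `M'` generated by `M`, and `f` factors through `A / M'`. -/
theorem polyDeg_invariant_subgroup {A A' : Type*} [AddCommGroup A] [AddCommGroup A']
    (f : A → A') (hf : ∃ n, PolyDeg n f) (M : AddSubmonoid A)
    (h : ∀ x : A, ∀ m ∈ M, f (x + m) = f x) :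
    (∀ x : A, ∀ m' ∈ AddSubgroup.closure (M : Set A), f (x + m') = f x) ∧
      ∃ g : A ⧸ AddSubgroup.closure (M : Set A) → A',
        f = g ∘ (QuotientAddGroup.mk : A → A ⧸ AddSubgroup.closure (M : Set A)) :=
  polyDeg_invariant_subgroup_general f M h
end

section
/- If f: A → B is a polynomial map of abelian groups of degree ≤ m and g: B → C is a polynomial map of degree ≤ n, then the composite g ∘ f: A → C is polynomial of degree ≤ mn. -/
open Finset
open scoped fwdDiff

section IterDiff

variable {ι M A : Type*} [AddCommMonoid M] [AddCommGroup A]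

theorem PolyDeg.succ : ∀ {n : ℕ} {F : M → A}, PolyDeg n F → PolyDeg (n + 1) F
  | 0, _, h => fun y x => by simp only [h (x + y), h x, sub_zero]
  | _ + 1, _, h => fun y => (h y).succ

theorem PolyDeg.mono {n k : ℕ} {F : M → A} (h : PolyDeg n F) (hnk : n ≤ k) : PolyDeg k F := by
  induction hnk with
  | refl => exact h
  | step _ ih => exact ih.succ

variable [DecidableEq ι]

/-- `Δ_[z i₁] (⋯ (Δ_[z iₖ] F)) x` for `s = {i₁, …, iₖ}`, written out as an alternating sum. -/
def iterDiff (z : ι → M) (s : Finset ι) (F : M → A) (x : M) : A :=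
  ∑ t ∈ s.powerset, (-1 : ℤ) ^ (s \ t).card • F (x + ∑ i ∈ t, z i)

theorem iterDiff_empty (z : ι → M) (F : M → A) (x : M) : iterDiff z ∅ F x = F x := by
  simp [iterDiff]

theorem iterDiff_insert {z : ι → M} {s : Finset ι} {a : ι} (ha : a ∉ s) (F : M → A) (x : M) :
    iterDiff z (insert a s) F x = iterDiff z s (Δ_[z a] F) x := by
  rw [iterDiff, sum_powerset_insert ha, ← sum_add_distrib, iterDiff]
  refine sum_congr rfl fun t ht => ?_
  have hat : a ∉ t := fun h => ha (mem_powerset.1 ht h)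
  rw [insert_sdiff_of_notMem _ hat, card_insert_of_notMem (fun h => ha (mem_sdiff.1 h).1),
    insert_sdiff_insert, sdiff_insert_of_notMem ha, sum_insert hat, fwdDiff, pow_succ, mul_neg_one,
    neg_smul, smul_sub, add_comm (z a), ← add_assoc, neg_add_eq_sub]

theorem iterDiff_congr {z z' : ι → M} {s : Finset ι} (h : ∀ i ∈ s, z i = z' i) (F : M → A)
    (x : M) : iterDiff z s F x = iterDiff z' s F x :=
  sum_congr rfl fun t ht => by
    rw [sum_congr rfl fun i hi => h i (mem_powerset.1 ht hi)]

theorem iterDiff_eq_zero_of_mem {z : ι → M} {s : Finset ι} {a : ι} (ha : a ∈ s) (hz : z a = 0)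
    (F : M → A) (x : M) : iterDiff z s F x = 0 := by
  have hΔ : Δ_[z a] F = 0 := funext fun y => by simp [fwdDiff, hz]
  rw [← insert_erase ha, iterDiff_insert (notMem_erase a s), hΔ]
  simp [iterDiff]

/-- Newton's formula. -/
theorem sum_powerset_iterDiff (z : ι → M) (u : Finset ι) (F : M → A) (x : M) :
    ∑ t ∈ u.powerset, iterDiff z t F x = F (x + ∑ i ∈ u, z i) := by
  induction u using Finset.induction_on generalizing F with
  | empty => simp [iterDiff_empty]
  | insert a u ha ih =>
    have hinsert : ∀ t ∈ u.powerset, iterDiff z (insert a t) F x = iterDiff z t (Δ_[z a] F) x :=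
      fun t ht => iterDiff_insert (fun h => ha (mem_powerset.1 ht h)) F x
    rw [sum_powerset_insert ha, sum_congr rfl hinsert, ih, ih, fwdDiff, add_sub_cancel,
      sum_insert ha, add_comm (z a), add_assoc]

theorem PolyDeg.iterDiff_eq_zero {n : ℕ} {F : M → A} (hF : PolyDeg n F) {s : Finset ι}
    (hs : n ≤ s.card) (z : ι → M) (x : M) : iterDiff z s F x = 0 := by
  induction s using Finset.induction_on generalizing n F with
  | empty =>
    obtain rfl : n = 0 := Nat.le_zero.1 hs
    rw [iterDiff_empty]
    exact hF x
  | insert a s ha ih =>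
    rw [card_insert_of_notMem ha] at hs
    rw [iterDiff_insert ha]
    exact ih (hF.mono hs (z a)) le_rfl

theorem polyDeg_of_iterDiff_eq_zero [Infinite ι] {n : ℕ} {F : M → A}
    (h : ∀ s : Finset ι, s.card = n → ∀ (z : ι → M) (x : M), iterDiff z s F x = 0) :
    PolyDeg n F := by
  induction n generalizing F with
  | zero => exact fun x => by simpa [iterDiff_empty] using h ∅ rfl 0 x
  | succ n ih =>
    refine fun y => ih fun s hs z x => ?_
    obtain ⟨a, ha⟩ := Infinite.exists_notMem_finset s
    have hz : ∀ i ∈ s, Function.update z a y i = z i :=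
      fun i hi => Function.update_of_ne (ne_of_mem_of_not_mem hi ha) y z
    have := h (insert a s) (by rw [card_insert_of_notMem ha, hs]) (Function.update z a y) x
    rwa [iterDiff_insert ha, Function.update_self, iterDiff_congr hz] at this

end IterDiff

section Cube

variable {ι A : Type*} [DecidableEq ι] [AddCommGroup A]

theorem sum_Icc_neg_one_pow_card_sdiff (w s : Finset ι) :
    ∑ u ∈ Icc w s, (-1 : ℤ) ^ (s \ u).card = if w = s then 1 else 0 := by
  by_cases hws : w ⊆ s
  · have hcompl : ∑ u ∈ Icc w s, (-1 : ℤ) ^ (s \ u).card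
        = ∑ v ∈ (s \ w).powerset, (-1 : ℤ) ^ v.card := by
      refine sum_nbij' (s \ ·) (s \ ·) ?_ ?_ ?_ ?_ fun _ _ => rfl
      · intro u hu
        exact mem_powerset.2 (sdiff_subset_sdiff le_rfl (mem_Icc.1 hu).1)
      · intro v hv
        exact mem_Icc.2 ⟨subset_sdiff.2 ⟨hws, disjoint_of_subset_right (mem_powerset.1 hv)
          disjoint_sdiff⟩, sdiff_subset⟩
      · intro u hu
        exact Finset.sdiff_sdiff_eq_self (mem_Icc.1 hu).2
      · intro v hv
        exact Finset.sdiff_sdiff_eq_self ((mem_powerset.1 hv).trans sdiff_subset)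
    rw [hcompl, sum_powerset_neg_one_pow_card]
    by_cases hsw : w = s
    · simp [hsw]
    · rw [if_neg hsw, if_neg fun h => hsw (subset_antisymm hws (sdiff_eq_empty_iff_subset.1 h))]
  · rw [Icc_eq_empty hws, sum_empty, if_neg fun h => hws h.le]

theorem sum_neg_one_pow_card_sdiff_smul_sum_powerset_powerset (s : Finset ι)
    (c : Finset (Finset ι) → A) :
    ∑ u ∈ s.powerset, (-1 : ℤ) ^ (s \ u).card • ∑ V ∈ u.powerset.powerset, c V
      = ∑ V ∈ s.powerset.powerset with V.sup id = s, c V := by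
  have hcover : ∀ (V : Finset (Finset ι)) u, V ⊆ u.powerset ↔ V.sup id ⊆ u := by
    simp [subset_iff, Finset.sup_le_iff]
  simp_rw [smul_sum]
  rw [sum_comm' (t' := s.powerset.powerset) (s' := fun V => Icc (V.sup id) s), sum_filter]
  · refine sum_congr rfl fun V _ => ?_
    rw [← sum_smul, sum_Icc_neg_one_pow_card_sdiff, ite_smul, one_smul, zero_smul]
  · intro u V
    simp only [mem_powerset, mem_Icc, hcover]
    exact ⟨fun h => ⟨⟨h.2, h.1⟩, h.2.trans h.1⟩, fun h => ⟨h.1.2, h.1.1⟩⟩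

end Cube

/-- The composite of a polynomial map of degree `≤ m` with a polynomial map of degree `≤ n`
is polynomial of degree `≤ m * n`. -/
theorem polyDeg_comp {A B C : Type*} [AddCommGroup A] [AddCommGroup B] [AddCommGroup C]
    (m n : ℕ) (f : A → B) (g : B → C)
    (hf : PolyDeg (m + 1) f) (hg : PolyDeg (n + 1) g) :
    PolyDeg (m * n + 1) (g ∘ f) := by
  classical
  refine polyDeg_of_iterDiff_eq_zero (ι := ℕ) fun s hs z x => ?_
  set δ : Finset ℕ → B := fun t => iterDiff z t f x
  have hexpand : ∀ u, (g ∘ f) (x + ∑ i ∈ u, z i) = ∑ V ∈ u.powerset.powerset, iterDiff δ V g 0 :=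
    fun u => by
      rw [sum_powerset_iterDiff, zero_add, Function.comp_apply, ← sum_powerset_iterDiff z u f x]
  have hvanish : ∀ V ∈ s.powerset.powerset, V.sup id = s → iterDiff δ V g 0 = 0 := by
    intro V _ hcover
    by_cases hlarge : ∃ t ∈ V, m + 1 ≤ t.card
    · obtain ⟨t, htV, ht⟩ := hlarge
      exact iterDiff_eq_zero_of_mem htV (hf.iterDiff_eq_zero ht z x) g 0
    · push Not at hlarge
      have hcard : m * n + 1 ≤ V.card * m := by
        rw [← hs, ← hcover, sup_eq_biUnion]
        exact card_biUnion_le_card_mul V id m fun t ht => Nat.lt_succ_iff.1 (hlarge t ht)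
      exact hg.iterDiff_eq_zero (by nlinarith) δ 0
  calc iterDiff z s (g ∘ f) x
      = ∑ u ∈ s.powerset, (-1 : ℤ) ^ (s \ u).card • ∑ V ∈ u.powerset.powerset, iterDiff δ V g 0 :=
        sum_congr rfl fun u _ => by rw [hexpand]
    _ = ∑ V ∈ s.powerset.powerset with V.sup id = s, iterDiff δ V g 0 :=
        sum_neg_one_pow_card_sdiff_smul_sum_powerset_powerset s _
    _ = 0 := sum_eq_zero fun V hV => hvanish V (mem_filter.1 hV).1 (mem_filter.1 hV).2
end

section
/- Let M be a commutative monoid, A an abelian group, and f, g: M → A polynomial maps of degrees ≤ m and ≤ n respectively, valued in a commutative ring A. Then the pointwise product x ↦ f(x)·g(x) is polynomial of degree ≤ m + n. -/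
/-!
Difference operators obey the Leibniz rule
`Δ_y (f g) = Δ_y f · g(· + y) + f · Δ_y g`, and translation preserves degree. So a double
induction shows that the product of maps in `PolyDeg m` and `PolyDeg n` is in
`PolyDeg (m + n - 1)`, each Leibniz term lowering one index; the truncated subtraction is
harmless since for `m = 0` or `n = 0` the product vanishes.
-/
namespace PolyDeg

variable {M A : Type*} [AddCommMonoid M]

section AddCommGroup

variable [AddCommGroup A]

theorem apply_eq_zero {f : M → A} (hf : PolyDeg 0 f) (x : M) : f x = 0 :=
  hf x

theorem zero : ∀ k : ℕ, PolyDeg k (fun _ : M => (0 : A))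
  | 0 => fun _ => rfl
  | k + 1 => fun _ => by simpa only [sub_self] using zero k

theorem add : ∀ {k : ℕ} {f g : M → A}, PolyDeg k f → PolyDeg k g →
    PolyDeg k (fun x => f x + g x)
  | 0, _, _, hf, hg => fun x => by simp only [hf x, hg x, add_zero]
  | _ + 1, _, _, hf, hg => fun y => by
    simpa only [add_sub_add_comm] using (hf y).add (hg y)

theorem comp_add_right : ∀ {k : ℕ} {f : M → A}, PolyDeg k f → ∀ c : M,
    PolyDeg k (fun x => f (x + c))
  | 0, _, hf, c => fun x => hf (x + c)
  | _ + 1, _, hf, c => fun y => by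
    simpa only [add_right_comm _ y c] using (hf y).comp_add_right c

end AddCommGroup

theorem mul [Ring A] : ∀ {m n : ℕ} {f g : M → A}, PolyDeg m f → PolyDeg n g →
    PolyDeg (m + n - 1) (fun x => f x * g x)
  | 0, _, _, _, hf, _ => by
    simpa only [hf.apply_eq_zero, zero_mul] using zero _
  | _, 0, _, _, _, hg => by
    simpa only [hg.apply_eq_zero, mul_zero] using zero _
  | m + 1, n + 1, f, g, hf, hg => by
    rw [show m + 1 + (n + 1) - 1 = m + n + 1 by omega]
    intro y
    have leibniz : (fun x => f (x + y) * g (x + y) - f x * g x) =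
        fun x => (f (x + y) - f x) * g (x + y) + f x * (g (x + y) - g x) := by
      funext x
      rw [sub_mul, mul_sub]
      abel
    have hdiff_f : PolyDeg (m + (n + 1) - 1) _ := (hf y).mul (hg.comp_add_right y)
    have hdiff_g : PolyDeg (m + 1 + n - 1) _ := hf.mul (hg y)
    rw [show m + (n + 1) - 1 = m + n by omega] at hdiff_f
    rw [show m + 1 + n - 1 = m + n by omega] at hdiff_g
    rw [leibniz]
    exact hdiff_f.add hdiff_g

end PolyDeg

/-- If `f, g : M → A` are polynomial maps of degrees `≤ m` and `≤ n` into a commutative ring `A`,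
then the pointwise product `x ↦ f x * g x` is polynomial of degree `≤ m + n`. -/
theorem polyDeg_mul {M A : Type*} [AddCommMonoid M] [CommRing A]
    (m n : ℕ) (f g : M → A) (hf : PolyDeg (m + 1) f) (hg : PolyDeg (n + 1) g) :
    PolyDeg (m + n + 1) (fun x => f x * g x) := by
  simpa only [show m + 1 + (n + 1) - 1 = m + n + 1 by omega] using hf.mul hg
end
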